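/- Let -1 ≤ γ₁ < γ₂ ≤ 1, ℓ ∈ ℕ, and 1 ≤ m ≤ ℓ. Then ∫_{γ₁}^{γ₂} P_ℓ^m(u) du = Σ_{k=m}^{ℓ} C(ℓ,k)·C(ℓ+k,k)·(2(-1)^k k!/(k-m)!)·[B((1+γ₂)/2; m/2+1, k−m/2+1) − B((1+γ₁)/2; m/2+1, k−m/2+1)], where B(x; a, b) is the incomplete Beta function. -/

import Mathlib

/-!
Write `X² - 1 = (X - 1)((X - 1) + 2)` and expand the second factor binomially: Rodrigues'
formula then gives the expansion `P_ℓ(u) = ∑ₖ C(ℓ,k) C(ℓ+k,k) ((u - 1)/2)^k` about `u = 1`,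
which can be differentiated `m` times termwise. Under `t = (1 + u)/2` each resulting term
`(1 - u²)^{m/2} (u - 1)^{k-m}` becomes a multiple of `t^{m/2} (1 - t)^{k - m/2}`, the integrand
of the incomplete Beta function.
-/

noncomputable def legendreP (ℓ : ℕ) (u : ℝ) : ℝ :=
  (1 / (2 ^ ℓ * (Nat.factorial ℓ : ℝ))) * iteratedDeriv ℓ (fun x : ℝ => (x ^ 2 - 1) ^ ℓ) u

noncomputable def assocLegendre (ℓ m : ℕ) (u : ℝ) : ℝ :=
  (-1 : ℝ) ^ m * (1 - u ^ 2) ^ ((m : ℝ) / 2) * iteratedDeriv m (legendreP ℓ) u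

noncomputable def incBeta (x a b : ℝ) : ℝ :=
  ∫ t in (0 : ℝ)..x, t ^ (a - 1) * (1 - t) ^ (b - 1)

open Polynomial Finset Nat

section Rodrigues

variable {R : Type*} [CommRing R]

theorem X_sq_sub_one_pow_eq_sum (ℓ : ℕ) :
    (X ^ 2 - 1 : R[X]) ^ ℓ =
      ∑ k ∈ range (ℓ + 1), ((ℓ.choose k * 2 ^ (ℓ - k) : ℕ) : R[X]) * (X - C 1) ^ (ℓ + k) := by
  have hfactor : (X ^ 2 - 1 : R[X]) = (X - C 1) * ((X - C 1) + 2) := by rw [C_1]; ring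
  rw [hfactor, mul_pow, add_pow, mul_sum]
  refine sum_congr rfl fun k _ => ?_
  push_cast
  ring

theorem iterate_derivative_X_sq_sub_one_pow (ℓ : ℕ) :
    derivative^[ℓ] ((X ^ 2 - 1 : R[X]) ^ ℓ) =
      ∑ k ∈ range (ℓ + 1),
        ((ℓ.choose k * (ℓ + k).choose k * ℓ ! * 2 ^ (ℓ - k) : ℕ) : R[X]) * (X - C 1) ^ k := by
  rw [X_sq_sub_one_pow_eq_sum, iterate_derivative_sum]
  refine sum_congr rfl fun k _ => ?_
  rw [iterate_derivative_natCast_mul, iterate_derivative_X_sub_pow, Nat.add_sub_cancel_left,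
    descFactorial_eq_factorial_mul_choose, choose_symm_add, nsmul_eq_mul]
  push_cast
  ring

end Rodrigues

theorem Polynomial.iteratedDeriv_eval {𝕜 : Type*} [NontriviallyNormedField 𝕜] (p : 𝕜[X])
    (n : ℕ) : iteratedDeriv n (fun x => p.eval x) = fun x => (derivative^[n] p).eval x := by
  induction n with
  | zero => simp
  | succ n ih =>
    rw [iteratedDeriv_succ, ih, Function.iterate_succ_apply']
    funext x
    exact Polynomial.deriv _

theorem legendreP_eq_eval (ℓ : ℕ) :
    legendreP ℓ = fun u => (∑ k ∈ range (ℓ + 1),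
      C ((ℓ.choose k * (ℓ + k).choose k : ℝ) / 2 ^ k) * (X - C 1) ^ k).eval u := by
  have hrodrigues :
      (fun x : ℝ => (x ^ 2 - 1) ^ ℓ) = fun x => ((X ^ 2 - 1 : ℝ[X]) ^ ℓ).eval x := by
    simp
  funext u
  rw [legendreP, hrodrigues, iteratedDeriv_eval, iterate_derivative_X_sq_sub_one_pow]
  simp only [eval_finsetSum, mul_sum, eval_mul, eval_C, eval_natCast]
  refine sum_congr rfl fun k hk => ?_
  push_cast
  rw [pow_sub₀ _ two_ne_zero (mem_range_succ_iff.1 hk)]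
  field_simp

theorem iteratedDeriv_legendreP (ℓ m : ℕ) (u : ℝ) :
    iteratedDeriv m (legendreP ℓ) u =
      ∑ k ∈ Icc m ℓ, (ℓ.choose k * (ℓ + k).choose k : ℝ) / 2 ^ k *
        ((k ! : ℝ) / (k - m)!) * (u - 1) ^ (k - m) := by
  have hsub : Icc m ℓ ⊆ range (ℓ + 1) := fun k hk => mem_range_succ_iff.2 (mem_Icc.1 hk).2
  rw [legendreP_eq_eval, iteratedDeriv_eval, iterate_derivative_sum]
  simp only [iterate_derivative_C_mul, iterate_derivative_X_sub_pow, eval_finsetSum, eval_mul,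
    eval_C, eval_pow, eval_sub, eval_X, nsmul_eq_mul, eval_natCast, mul_assoc]
  refine (sum_subset hsub fun k _ hk => ?_).symm.trans (sum_congr rfl fun k hk => ?_)
  · have hkm : k < m := by
      simp only [mem_range, mem_Icc, not_and_or, not_le] at *
      omega
    simp [descFactorial_eq_zero_iff_lt.2 hkm]
  · rw [← factorial_mul_descFactorial (mem_Icc.1 hk).1]
    push_cast
    field_simp

theorem incBeta_sub_incBeta {a b : ℝ} (ha : 1 ≤ a) (hb : 1 ≤ b) (x y : ℝ) :
    incBeta y a b - incBeta x a b = ∫ t in x..y, t ^ (a - 1) * (1 - t) ^ (b - 1) := by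
  have hcont : Continuous fun t : ℝ => t ^ (a - 1) * (1 - t) ^ (b - 1) :=
    (Real.continuous_rpow_const (by linarith)).mul
      ((Real.continuous_rpow_const (by linarith)).comp (continuous_const.sub continuous_id))
  exact intervalIntegral.integral_interval_sub_left (hcont.intervalIntegrable _ _)
    (hcont.intervalIntegrable _ _)

theorem one_sub_sq_rpow_mul_sub_one_pow {a : ℝ} (ha : 0 ≤ a) (n : ℕ) {u : ℝ}
    (hu : u ∈ Set.Icc (-1) 1) :
    (1 - u ^ 2) ^ a * (u - 1) ^ n =
      (-1) ^ n * 2 ^ n * 4 ^ a * ((u / 2 + 1 / 2) ^ a * (1 - (u / 2 + 1 / 2)) ^ (a + n)) := by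
  set t := u / 2 + 1 / 2
  have ht : 0 ≤ t := by simp only [t]; linarith [hu.1]
  have ht' : 0 ≤ 1 - t := by simp only [t]; linarith [hu.2]
  have hsq : 1 - u ^ 2 = 4 * (t * (1 - t)) := by simp only [t]; ring
  have hlin : u - 1 = -2 * (1 - t) := by simp only [t]; ring
  rw [hsq, hlin, Real.mul_rpow (by norm_num) (mul_nonneg ht ht'), Real.mul_rpow ht ht',
    Real.rpow_add_of_nonneg ht' ha n.cast_nonneg, Real.rpow_natCast, mul_pow, neg_pow]
  ring

theorem integral_one_sub_sq_rpow_mul_sub_one_pow {a : ℝ} (ha : 0 ≤ a) (n : ℕ) {γ₁ γ₂ : ℝ}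
    (h₁ : -1 ≤ γ₁) (h₁₂ : γ₁ ≤ γ₂) (h₂ : γ₂ ≤ 1) :
    ∫ u in γ₁..γ₂, (1 - u ^ 2) ^ a * (u - 1) ^ n =
      (-1) ^ n * 2 ^ (n + 1) * 4 ^ a *
        (incBeta ((1 + γ₂) / 2) (a + 1) (a + n + 1) -
          incBeta ((1 + γ₁) / 2) (a + 1) (a + n + 1)) := by
  have hpointwise : Set.EqOn (fun u : ℝ => (1 - u ^ 2) ^ a * (u - 1) ^ n)
      (fun u => (-1) ^ n * 2 ^ n * 4 ^ a *
        (fun t : ℝ => t ^ a * (1 - t) ^ (a + n)) (u / 2 + 1 / 2)) (Set.uIcc γ₁ γ₂) := by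
    intro u hu
    rw [Set.uIcc_of_le h₁₂] at hu
    exact one_sub_sq_rpow_mul_sub_one_pow ha n ⟨h₁.trans hu.1, hu.2.trans h₂⟩
  rw [intervalIntegral.integral_congr hpointwise, intervalIntegral.integral_const_mul,
    intervalIntegral.integral_comp_div_add (fun t : ℝ => t ^ a * (1 - t) ^ (a + n)) two_ne_zero,
    incBeta_sub_incBeta (by linarith) (by linarith)]
  simp only [add_sub_cancel_right, smul_eq_mul]
  rw [show γ₁ / 2 + 1 / 2 = (1 + γ₁) / 2 by ring, show γ₂ / 2 + 1 / 2 = (1 + γ₂) / 2 by ring]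
  ring

theorem assocLegendre_eq_sum (ℓ m : ℕ) (u : ℝ) :
    assocLegendre ℓ m u =
      ∑ k ∈ Icc m ℓ, (-1) ^ m * (ℓ.choose k * (ℓ + k).choose k : ℝ) / 2 ^ k *
        ((k ! : ℝ) / (k - m)!) * ((1 - u ^ 2) ^ ((m : ℝ) / 2) * (u - 1) ^ (k - m)) := by
  rw [assocLegendre, iteratedDeriv_legendreP, mul_sum]
  refine sum_congr rfl fun k _ => ?_
  ring

theorem integral_assocLegendre_general (ℓ m : ℕ)
    (γ₁ γ₂ : ℝ) (h₁ : -1 ≤ γ₁) (h₁₂ : γ₁ < γ₂) (h₂ : γ₂ ≤ 1) :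
    ∫ u in γ₁..γ₂, assocLegendre ℓ m u =
      ∑ k ∈ Finset.Icc m ℓ,
        (ℓ.choose k : ℝ) * ((ℓ + k).choose k : ℝ) *
          (2 * (-1) ^ k * (k.factorial : ℝ) / ((k - m).factorial : ℝ)) *
          (incBeta ((1 + γ₂) / 2) ((m : ℝ) / 2 + 1) ((k : ℝ) - (m : ℝ) / 2 + 1) -
            incBeta ((1 + γ₁) / 2) ((m : ℝ) / 2 + 1) ((k : ℝ) - (m : ℝ) / 2 + 1)) := by
  have hm : (0 : ℝ) ≤ m / 2 := by positivity
  have hfour : (4 : ℝ) ^ ((m : ℝ) / 2) = 2 ^ m := by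
    rw [show (4 : ℝ) = 2 ^ (2 : ℝ) by norm_num, ← Real.rpow_mul zero_le_two,
      mul_div_cancel₀ _ two_ne_zero, Real.rpow_natCast]
  have hintegrable (k : ℕ) : IntervalIntegrable
      (fun u : ℝ => (1 - u ^ 2) ^ ((m : ℝ) / 2) * (u - 1) ^ (k - m)) MeasureTheory.volume γ₁ γ₂ :=
    (((Real.continuous_rpow_const hm).comp (continuous_const.sub (continuous_pow 2))).mul
      ((continuous_id.sub continuous_const).pow _)).intervalIntegrable _ _
  simp_rw [assocLegendre_eq_sum]
  rw [intervalIntegral.integral_finsetSum fun k _ => (hintegrable k).const_mul _]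
  refine sum_congr rfl fun k hk => ?_
  obtain ⟨j, rfl⟩ := Nat.exists_eq_add_of_le (mem_Icc.1 hk).1
  rw [intervalIntegral.integral_const_mul,
    integral_one_sub_sq_rpow_mul_sub_one_pow hm _ h₁ h₁₂.le h₂, Nat.add_sub_cancel_left, hfour,
    show (m : ℝ) / 2 + j + 1 = ((m + j : ℕ) : ℝ) - m / 2 + 1 by push_cast; ring]
  field_simp
  ring

theorem integral_assocLegendre (ℓ m : ℕ) (hm : 1 ≤ m) (hmℓ : m ≤ ℓ)
    (γ₁ γ₂ : ℝ) (h₁ : -1 ≤ γ₁) (h₁₂ : γ₁ < γ₂) (h₂ : γ₂ ≤ 1) :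
    ∫ u in γ₁..γ₂, assocLegendre ℓ m u =
      ∑ k ∈ Finset.Icc m ℓ,
        (ℓ.choose k : ℝ) * ((ℓ + k).choose k : ℝ) *
          (2 * (-1) ^ k * (k.factorial : ℝ) / ((k - m).factorial : ℝ)) *
          (incBeta ((1 + γ₂) / 2) ((m : ℝ) / 2 + 1) ((k : ℝ) - (m : ℝ) / 2 + 1) -
            incBeta ((1 + γ₁) / 2) ((m : ℝ) / 2 + 1) ((k : ℝ) - (m : ℝ) / 2 + 1)) :=
  integral_assocLegendre_general ℓ m γ₁ γ₂ h₁ h₁₂ h₂
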